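/- arXiv:2504.18360 — 4 statements merged into one kernel-verified Lean document; each statement's English description precedes it below -/
import Mathlib

section
/- Let α be a positive integer and let n be a positive divisor of 1 + α². If T is a nonzero element of the lattice L = Z·(n,0) ⊕ Z·(−α,1) ⊆ Z², then n ≤ ‖T‖², where ‖·‖ is the Euclidean norm. In particular every nonzero lattice vector has length at least √n. -/
/-- If `n > 0` divides `1 + α²` (with `α > 0`) then every nonzero element
`T = (n·u − α·v, v)` of the lattice `L = ℤ·(n,0) ⊕ ℤ·(−α,1)` satisfies `n ≤ ‖T‖²`;
in particular every nonzero lattice vector has Euclidean length at least `√n`. -/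
theorem stmt_0 (α n : ℤ) (hα : 0 < α) (hn : 0 < n) (hdvd : n ∣ 1 + α ^ 2)
    (u v : ℤ) (hT : (n * u - α * v, v) ≠ ((0 : ℤ), (0 : ℤ))) :
    n ≤ (n * u - α * v) ^ 2 + v ^ 2 ∧
      Real.sqrt (n : ℝ) ≤ Real.sqrt (((n * u - α * v : ℤ) : ℝ) ^ 2 + ((v : ℤ) : ℝ) ^ 2) := by
  have hdvd2 : n ∣ (n * u - α * v) ^ 2 + v ^ 2 := by
    have : (n * u - α * v) ^ 2 + v ^ 2 =
        n * (n * u ^ 2 - 2 * α * u * v) + (1 + α ^ 2) * v ^ 2 := by ring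
    rw [this]
    exact dvd_add (Dvd.intro _ rfl) (Dvd.dvd.mul_right hdvd _)
  have hpos : 0 < (n * u - α * v) ^ 2 + v ^ 2 := by
    rcases eq_or_ne (n * u - α * v) 0 with h1 | h1
    · rcases eq_or_ne v 0 with h2 | h2
      · exact absurd (by rw [h1, h2]) hT
      · have := sq_pos_of_ne_zero h2
        nlinarith [sq_nonneg (n * u - α * v)]
    · have := sq_pos_of_ne_zero h1
      nlinarith [sq_nonneg v]
  have h1 : n ≤ (n * u - α * v) ^ 2 + v ^ 2 := Int.le_of_dvd hpos hdvd2
  refine ⟨h1, Real.sqrt_le_sqrt ?_⟩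
  exact_mod_cast h1
end

section
/- Let γ be a simple closed lattice loop in Z² (a cycle in the grid graph Z² with no repeated vertices except the endpoints). Then the set of edges of γ equals the symmetric difference (sum over F₂) of the boundaries of the unit grid squares enclosed by γ. -/
open Finset

/-- The `𝔽₂`-chain (indicator function on grid edges, viewed as unordered pairs)
of the edges of a walk `γ` in the grid graph `ℤ²`. -/
def edgeChain {r : ℕ} (γ : Fin (r + 1) → ℤ × ℤ) : Sym2 (ℤ × ℤ) → ZMod 2 :=
  fun e => ∑ i : Fin r, if e = s(γ i.castSucc, γ i.succ) then 1 else 0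

/-- The `𝔽₂`-chain of the boundary of the unit grid square with lower-left corner `c`. -/
def squareBoundary (c : ℤ × ℤ) : Sym2 (ℤ × ℤ) → ZMod 2 := fun e =>
  (if e = s(c, (c.1 + 1, c.2)) then 1 else 0) +
  (if e = s((c.1 + 1, c.2), (c.1 + 1, c.2 + 1)) then 1 else 0) +
  (if e = s((c.1 + 1, c.2 + 1), (c.1, c.2 + 1)) then 1 else 0) +
  (if e = s((c.1, c.2 + 1), c) then 1 else 0)

/-- The step from `a` to `b` is a horizontal grid edge crossing the vertical ray going
upward from the center of the unit square with lower-left corner `c`. -/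
def crossesRay (a b c : ℤ × ℤ) : Prop :=
  a.2 = b.2 ∧ c.2 < a.2 ∧ ((a.1 = c.1 ∧ b.1 = c.1 + 1) ∨ (a.1 = c.1 + 1 ∧ b.1 = c.1))

/-- The unit square with lower-left corner `c` is enclosed by the closed curve `γ`
(Jordan curve criterion: the upward ray from its center crosses `γ` an odd number of
times). -/
instance (a b c : ℤ × ℤ) : Decidable (crossesRay a b c) := by
  unfold crossesRay; infer_instance

def enclosed {r : ℕ} (γ : Fin (r + 1) → ℤ × ℤ) (c : ℤ × ℤ) : Prop :=
  Odd (Finset.univ.filter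
    (fun i : Fin r => crossesRay (γ i.castSucc) (γ i.succ) c)).card

/-!
Work in `ZMod 2` and let `W c` be the parity of the number of crossings of the upward ray from
the square `c`, so that `c` is enclosed iff `W c = 1`. The chain `∑ c, W c • ∂□c` takes at an
edge the sum of `W` over the two squares adjacent to it, so it suffices to compare that sum with
the multiplicity of the edge in `γ`. For a horizontal edge this holds step by step: the rays from
the squares just below and just above the edge differ exactly by the edge. For the vertical edge
from `(x, y)` to `(x, y + 1)`, each step contributes to the edge and the two rays together the
change, between its endpoints, of the indicator of the half-line `{x} × (y, ∞)`; these changes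
cancel around the closed walk. The same telescoping shows that `W` vanishes below the walk, so
only finitely many squares are enclosed.
-/

def IsGridAdj (a b : ℤ × ℤ) : Prop := |b.1 - a.1| + |b.2 - a.2| = 1

lemma isGridAdj_iff {a b : ℤ × ℤ} :
    IsGridAdj a b ↔ (b.1 = a.1 + 1 ∧ b.2 = a.2) ∨ (b.1 = a.1 - 1 ∧ b.2 = a.2) ∨
      (b.1 = a.1 ∧ b.2 = a.2 + 1) ∨ (b.1 = a.1 ∧ b.2 = a.2 - 1) := by
  simp only [IsGridAdj, abs_eq_max_neg]; omega

lemma IsGridAdj.of_sym2_eq {a b p q : ℤ × ℤ} (h : s(p, q) = s(a, b)) (hab : IsGridAdj a b) :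
    IsGridAdj p q := by
  rcases Sym2.eq_iff.mp h with ⟨rfl, rfl⟩ | ⟨rfl, rfl⟩
  · exact hab
  · rw [IsGridAdj, abs_sub_comm, abs_sub_comm q.2]; exact hab

lemma exists_sym2_eq_of_isGridAdj {p q : ℤ × ℤ} (h : IsGridAdj p q) :
    ∃ u y : ℤ, s(p, q) = s((u, y), (u + 1, y)) ∨ s(p, q) = s((u, y), (u, y + 1)) := by
  obtain ⟨p1, p2⟩ := p
  obtain ⟨q1, q2⟩ := q
  simp only [isGridAdj_iff] at h
  rcases h with ⟨rfl, rfl⟩ | ⟨rfl, rfl⟩ | ⟨rfl, rfl⟩ | ⟨rfl, rfl⟩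
  · exact ⟨p1, q2, .inl rfl⟩
  · exact ⟨p1 - 1, q2, .inl (by rw [sub_add_cancel, Sym2.eq_swap])⟩
  · exact ⟨q1, p2, .inr rfl⟩
  · exact ⟨q1, p2 - 1, .inr (by rw [sub_add_cancel, Sym2.eq_swap])⟩

lemma Fin.sum_succ_sub_castSucc {M : Type*} [AddCommGroup M] {r : ℕ} (f : Fin (r + 1) → M) :
    ∑ i : Fin r, (f i.succ - f i.castSucc) = f (Fin.last r) - f 0 := by
  have h₁ := Fin.sum_univ_succ f
  have h₂ := Fin.sum_univ_castSucc f
  rw [sum_sub_distrib]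
  linear_combination (norm := abel) h₂ - h₁

lemma sum_add_eq_zero_of_closed {α R : Type*} [Ring R] [CharP R 2] {r : ℕ} (γ : Fin (r + 1) → α)
    (hclosed : γ (Fin.last r) = γ 0) (φ : α → R) :
    ∑ i : Fin r, (φ (γ i.succ) + φ (γ i.castSucc)) = 0 := by
  simp_rw [← CharTwo.sub_eq_add]
  rw [Fin.sum_succ_sub_castSucc fun i => φ (γ i)]
  simp [hclosed]

lemma squareBoundary_horizontal (c : ℤ × ℤ) (u y : ℤ) :
    squareBoundary c s((u, y), (u + 1, y)) =
      (if c = (u, y - 1) then 1 else 0) + (if c = (u, y) then 1 else 0) := by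
  have bottom : s((u, y), (u + 1, y)) = s(c, (c.1 + 1, c.2)) ↔ c = (u, y) := by
    simp only [Sym2.eq_iff, Prod.ext_iff]; omega
  have right : s((u, y), (u + 1, y)) ≠ s((c.1 + 1, c.2), (c.1 + 1, c.2 + 1)) := by
    simp only [ne_eq, Sym2.eq_iff, Prod.ext_iff]; omega
  have top : s((u, y), (u + 1, y)) = s((c.1 + 1, c.2 + 1), (c.1, c.2 + 1)) ↔ c = (u, y - 1) := by
    simp only [Sym2.eq_iff, Prod.ext_iff]; omega
  have left : s((u, y), (u + 1, y)) ≠ s((c.1, c.2 + 1), c) := by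
    simp only [ne_eq, Sym2.eq_iff, Prod.ext_iff]; omega
  simp only [squareBoundary, bottom, top, if_neg right, if_neg left, add_zero]
  exact add_comm _ _

lemma squareBoundary_vertical (c : ℤ × ℤ) (x y : ℤ) :
    squareBoundary c s((x, y), (x, y + 1)) =
      (if c = (x - 1, y) then 1 else 0) + (if c = (x, y) then 1 else 0) := by
  have bottom : s((x, y), (x, y + 1)) ≠ s(c, (c.1 + 1, c.2)) := by
    simp only [ne_eq, Sym2.eq_iff, Prod.ext_iff]; omega
  have right : s((x, y), (x, y + 1)) = s((c.1 + 1, c.2), (c.1 + 1, c.2 + 1)) ↔ c = (x - 1, y) := by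
    simp only [Sym2.eq_iff, Prod.ext_iff]; omega
  have top : s((x, y), (x, y + 1)) ≠ s((c.1 + 1, c.2 + 1), (c.1, c.2 + 1)) := by
    simp only [ne_eq, Sym2.eq_iff, Prod.ext_iff]; omega
  have left : s((x, y), (x, y + 1)) = s((c.1, c.2 + 1), c) ↔ c = (x, y) := by
    simp only [Sym2.eq_iff, Prod.ext_iff]; omega
  simp only [squareBoundary, right, left, if_neg bottom, if_neg top, zero_add, add_zero]

lemma squareBoundary_of_not_isGridAdj (c : ℤ × ℤ) {p q : ℤ × ℤ} (h : ¬ IsGridAdj p q) :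
    squareBoundary c s(p, q) = 0 := by
  have hc : ∀ a b : ℤ × ℤ, IsGridAdj a b → ¬ s(p, q) = s(a, b) :=
    fun a b hab he => h (hab.of_sym2_eq he)
  simp only [squareBoundary, isGridAdj_iff] at hc ⊢
  rw [if_neg (hc _ _ (by omega)), if_neg (hc _ _ (by omega)), if_neg (hc _ _ (by omega)),
    if_neg (hc _ _ (by omega))]
  rfl

def rayParity {r : ℕ} (γ : Fin (r + 1) → ℤ × ℤ) (c : ℤ × ℤ) : ZMod 2 :=
  ∑ i : Fin r, if crossesRay (γ i.castSucc) (γ i.succ) c then 1 else 0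

lemma rayParity_eq_one_iff {r : ℕ} (γ : Fin (r + 1) → ℤ × ℤ) (c : ℤ × ℤ) :
    rayParity γ c = 1 ↔ enclosed γ c := by
  rw [rayParity, sum_boole, ZMod.natCast_eq_one_iff_odd]
  rfl

lemma rayParity_eq_zero_iff {r : ℕ} (γ : Fin (r + 1) → ℤ × ℤ) (c : ℤ × ℤ) :
    rayParity γ c = 0 ↔ ¬ enclosed γ c := by
  rw [rayParity, sum_boole, ZMod.natCast_eq_zero_iff_even, ← Nat.not_odd_iff_even]
  rfl

lemma ite_crossesRay_of_lt {a b c : ℤ × ℤ} (hab : IsGridAdj a b) (ha : c.2 < a.2) :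
    (if crossesRay a b c then (1 : ZMod 2) else 0) =
      (if c.1 < b.1 then 1 else 0) + (if c.1 < a.1 then 1 else 0) := by
  rw [isGridAdj_iff] at hab
  split_ifs <;> simp only [crossesRay] at * <;> first | omega | decide

lemma ite_horizontal_edge_eq {a b : ℤ × ℤ} (u y : ℤ) :
    (if s((u, y), (u + 1, y)) = s(a, b) then (1 : ZMod 2) else 0) =
      (if crossesRay a b (u, y - 1) then 1 else 0) + (if crossesRay a b (u, y) then 1 else 0) := by
  simp only [Sym2.eq_iff, Prod.ext_iff]
  split_ifs <;> simp only [crossesRay] at * <;> first | omega | decide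

lemma ite_vertical_edge_add_eq {a b : ℤ × ℤ} (hab : IsGridAdj a b) (x y : ℤ) :
    (if s((x, y), (x, y + 1)) = s(a, b) then (1 : ZMod 2) else 0) +
        (if crossesRay a b (x - 1, y) then 1 else 0) + (if crossesRay a b (x, y) then 1 else 0) =
      (if b.1 = x ∧ y < b.2 then 1 else 0) + (if a.1 = x ∧ y < a.2 then 1 else 0) := by
  rw [isGridAdj_iff] at hab
  simp only [Sym2.eq_iff, Prod.ext_iff]
  split_ifs <;> simp only [crossesRay] at * <;> first | omega | decide

section ClosedWalk

variable {r : ℕ} (γ : Fin (r + 1) → ℤ × ℤ)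

lemma edgeChain_horizontal (u y : ℤ) :
    edgeChain γ s((u, y), (u + 1, y)) = rayParity γ (u, y - 1) + rayParity γ (u, y) := by
  rw [edgeChain, rayParity, rayParity, ← sum_add_distrib]
  exact sum_congr rfl fun i _ => ite_horizontal_edge_eq u y

variable (hstep : ∀ i : Fin r, IsGridAdj (γ i.castSucc) (γ i.succ))
include hstep

lemma edgeChain_of_not_isGridAdj {p q : ℤ × ℤ} (h : ¬ IsGridAdj p q) :
    edgeChain γ s(p, q) = 0 :=
  sum_eq_zero fun i _ => if_neg fun he => h ((hstep i).of_sym2_eq he)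

variable (hclosed : γ (Fin.last r) = γ 0)
include hclosed

lemma edgeChain_vertical (x y : ℤ) :
    edgeChain γ s((x, y), (x, y + 1)) = rayParity γ (x - 1, y) + rayParity γ (x, y) := by
  rw [← sub_eq_zero, CharTwo.sub_eq_add, ← add_assoc, edgeChain, rayParity, rayParity,
    ← sum_add_distrib, ← sum_add_distrib]
  exact (sum_congr rfl fun i _ => ite_vertical_edge_add_eq (hstep i) x y).trans
    (sum_add_eq_zero_of_closed γ hclosed fun p => if p.1 = x ∧ y < p.2 then 1 else 0)

lemma rayParity_eq_zero_of_forall_lt {c : ℤ × ℤ} (hlow : ∀ j, c.2 < (γ j).2) :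
    rayParity γ c = 0 :=
  (sum_congr rfl fun i _ => ite_crossesRay_of_lt (hstep i) (hlow _)).trans
    (sum_add_eq_zero_of_closed γ hclosed fun p => if c.1 < p.1 then 1 else 0)

lemma finite_setOf_enclosed : {c | enclosed γ c}.Finite := by
  obtain ⟨M, hM⟩ := (Set.finite_range fun j => max |(γ j).1| |(γ j).2|).bddAbove
  have hbound (j) : |(γ j).1| ≤ M ∧ |(γ j).2| ≤ M := max_le_iff.mp (hM ⟨j, rfl⟩)
  refine (Set.finite_Icc ((-M - 1, -M) : ℤ × ℤ) (M, M)).subset fun c hc => ?_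
  obtain ⟨i, hi⟩ := card_pos.mp (Odd.pos hc)
  obtain ⟨-, hci, hcol⟩ := (mem_filter.mp hi).2
  have hlow : -M ≤ c.2 := by
    by_contra! hlt
    refine (rayParity_eq_zero_iff γ c).mp ?_ hc
    exact rayParity_eq_zero_of_forall_lt γ hstep hclosed fun j => by
      have := abs_le.mp (hbound j).2; omega
  have hi₁ := abs_le.mp (hbound i.castSucc).1
  have hi₂ := abs_le.mp (hbound i.castSucc).2
  simp only [Set.mem_Icc, Prod.le_def]
  omega

lemma edgeChain_eq_sum_squareBoundary (F : Finset (ℤ × ℤ)) (hF : ∀ c, c ∈ F ↔ enclosed γ c) :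
    edgeChain γ = ∑ c ∈ F, squareBoundary c := by
  have hW (c) : (if c ∈ F then (1 : ZMod 2) else 0) = rayParity γ c := by
    split_ifs with h
    · exact ((rayParity_eq_one_iff γ c).mpr ((hF c).mp h)).symm
    · exact ((rayParity_eq_zero_iff γ c).mpr (mt (hF c).mpr h)).symm
  funext e
  rw [Finset.sum_apply]
  induction e using Sym2.ind with | _ p q => ?_
  by_cases hpq : IsGridAdj p q
  · obtain ⟨u, y, he | he⟩ := exists_sym2_eq_of_isGridAdj hpq <;> rw [he]
    · simp only [squareBoundary_horizontal, sum_add_distrib, sum_ite_eq', hW,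
        edgeChain_horizontal]
    · simp only [squareBoundary_vertical, sum_add_distrib, sum_ite_eq', hW,
        edgeChain_vertical γ hstep hclosed]
  · rw [edgeChain_of_not_isGridAdj γ hstep hpq,
      sum_eq_zero fun c _ => squareBoundary_of_not_isGridAdj c hpq]

end ClosedWalk

theorem stmt_16_general (r : ℕ) (γ : Fin (r + 1) → ℤ × ℤ)
    (hclosed : γ (Fin.last r) = γ 0)
    (hstep : ∀ i : Fin r,
      |(γ i.succ).1 - (γ i.castSucc).1| + |(γ i.succ).2 - (γ i.castSucc).2| = 1) :
    ∃ F : Finset (ℤ × ℤ), (∀ c : ℤ × ℤ, c ∈ F ↔ enclosed γ c) ∧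
      edgeChain γ = ∑ c ∈ F, squareBoundary c := by
  have hfin := finite_setOf_enclosed γ hstep hclosed
  have hF (c : ℤ × ℤ) : c ∈ hfin.toFinset ↔ enclosed γ c := hfin.mem_toFinset
  exact ⟨hfin.toFinset, hF, edgeChain_eq_sum_squareBoundary γ hstep hclosed _ hF⟩

/-- for a simple closed loop `γ` in the grid graph `ℤ²`, the edge set of
`γ` equals the sum over `𝔽₂` (symmetric difference) of the boundaries of the unit grid
squares enclosed by `γ`. -/
theorem stmt_16 (r : ℕ) (hr : 1 ≤ r) (γ : Fin (r + 1) → ℤ × ℤ)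
    (hclosed : γ (Fin.last r) = γ 0)
    (hstep : ∀ i : Fin r,
      |(γ i.succ).1 - (γ i.castSucc).1| + |(γ i.succ).2 - (γ i.castSucc).2| = 1)
    (hsimple : ∀ i j : Fin r, γ i.castSucc = γ j.castSucc → i = j) :
    ∃ F : Finset (ℤ × ℤ), (∀ c : ℤ × ℤ, c ∈ F ↔ enclosed γ c) ∧
      edgeChain γ = ∑ c ∈ F, squareBoundary c :=
  stmt_16_general r γ hclosed hstep
end

section
/- Let n ≥ 6 and 1 ≤ α ≤ n−1 with n dividing 1 + α². Then every vector in the kernel of H_X = [Circ(1+x,n), Circ(1+x^α,n)] over F₂ that is not in the row space of H_Z = [Circ(1+x^α,n)ᵀ, Circ(1+x,n)ᵀ] has Hamming weight at least √n. -/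
/-!
Identify `ZMod n` with the torus `ℤ² / L`, `L = ℤ(n,0) ⊕ ℤ(-α,1)`, via `(i, j) ↦ i + α j`, and
put the two halves `u`, `w` of `v` on the vertical and horizontal edges. Then `H_X v = 0` says that
this edge labelling is closed, so it has a potential `F` on `ℤ²`, and `v` lies in the row space of
`H_Z` exactly when `F` descends to the torus, i.e. when `F (p + ℓ) = F p` for all `ℓ ∈ L`. Since
`n ∣ 1 + α²`, `L` is an ideal of `ℤ[i]`, generated by some `a + b i` with `a² + b² ≤ n`. If `v` is
not in the row space, `F` jumps along `ℓ = (a, b)` or `ℓ = (-b, a)`; then each of the `n`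
translates of a staircase path from `p` to `p + ℓ` meets the support of `v`, and each edge lies on
at most `max(|a|, |b|) ≤ √n` of them, so `n ≤ √n · wt(v)`.
-/

open Polynomial

/-- The `n × n` circulant matrix over `𝔽₂` of a polynomial `A`. -/
def Circ (n : ℕ) (A : Polynomial (ZMod 2)) : Matrix (ZMod n) (ZMod n) (ZMod 2) :=
  Matrix.of fun j k => A.coeff ((j - k).val)

open scoped Matrix Finset

section Circulant

theorem Circ_add {n : ℕ} (A B : (ZMod 2)[X]) : Circ n (A + B) = Circ n A + Circ n B := by
  ext j k
  simp [Circ]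

variable {n : ℕ} [NeZero n]

theorem Circ_X_pow_mulVec {β : ℕ} (hβ : β < n) (y : ZMod n → ZMod 2) :
    Circ n (X ^ β) *ᵥ y = fun k => y (k - β) := by
  ext k
  have hval : ∀ j : ZMod n, (k - j).val = β ↔ j = k - β := fun j => by
    constructor
    · intro h
      rw [← h, ZMod.natCast_zmod_val, sub_sub_cancel]
    · rintro rfl
      rw [sub_sub_cancel, ZMod.val_natCast_of_lt hβ]
  simp [Matrix.mulVec, dotProduct, Circ, coeff_X_pow, hval]

theorem Circ_one_add_X_pow_mulVec {β : ℕ} (hβ : β < n) (y : ZMod n → ZMod 2) :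
    Circ n (1 + X ^ β) *ᵥ y = fun k => y k + y (k - β) := by
  rw [← pow_zero X, Circ_add, Matrix.add_mulVec, Circ_X_pow_mulVec (NeZero.pos n),
    Circ_X_pow_mulVec hβ]
  ext k
  simp

theorem Circ_one_add_X_mulVec (hn : 1 < n) (y : ZMod n → ZMod 2) :
    Circ n (1 + X) *ᵥ y = fun k => y k + y (k - 1) := by
  simpa using Circ_one_add_X_pow_mulVec hn y

theorem fromCols_Circ_mulVec_sumElim (hn : 1 < n) {α : ℕ} (hα : α < n)
    (u w : ZMod n → ZMod 2) :
    Matrix.fromCols (Circ n (1 + X)) (Circ n (1 + X ^ α)) *ᵥ Sum.elim u w =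
      fun k => u k + u (k - 1) + (w k + w (k - α)) := by
  rw [Matrix.fromCols_mulVec_sumElim, Circ_one_add_X_mulVec hn, Circ_one_add_X_pow_mulVec hα]
  rfl

theorem vecMul_fromCols_Circ_transpose (hn : 1 < n) {α : ℕ} (hα : α < n)
    (y : ZMod n → ZMod 2) :
    y ᵥ* Matrix.fromCols (Circ n (1 + X ^ α))ᵀ (Circ n (1 + X))ᵀ =
      Sum.elim (fun k => y k + y (k - α)) (fun k => y k + y (k - 1)) := by
  rw [Matrix.vecMul_fromCols, Matrix.vecMul_transpose, Matrix.vecMul_transpose,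
    Circ_one_add_X_mulVec hn, Circ_one_add_X_pow_mulVec hα]

end Circulant

theorem hammingNorm_sumElim {ι κ M : Type*} [Fintype ι] [Fintype κ] [Zero M] [DecidableEq M]
    (u : ι → M) (w : κ → M) :
    hammingNorm (Sum.elim u w) = hammingNorm u + hammingNorm w := by
  rw [hammingNorm, hammingNorm, hammingNorm, Finset.card_filter, Finset.card_filter,
    Finset.card_filter, Fintype.sum_sum_type]
  rfl

theorem sum_card_filter_apply_add_ne_zero {A ι M : Type*} [AddGroup A] [Fintype A]
    [Zero M] [DecidableEq M] (f : A → M) (s : Finset ι) (e : ι → A) :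
    ∑ c : A, #{t ∈ s | f (c + e t) ≠ 0} = #s * hammingNorm f := by
  simp only [Finset.card_filter]
  rw [Finset.sum_comm, ← smul_eq_mul, ← Finset.sum_const]
  refine Finset.sum_congr rfl fun t _ => ?_
  rw [hammingNorm, Finset.card_filter]
  exact Fintype.sum_equiv (Equiv.addRight (e t)) _ _ fun c => rfl

theorem le_sq_add_of_le_mul_add_mul {n x y U W : ℕ} (hx : x ^ 2 ≤ n) (hy : y ^ 2 ≤ n)
    (h : n ≤ x * U + y * W) : n ≤ (U + W) ^ 2 := by
  have hmS : n ≤ max x y * (U + W) := h.trans (by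
    rw [mul_add]
    exact add_le_add (Nat.mul_le_mul_right _ (le_max_left x y))
      (Nat.mul_le_mul_right _ (le_max_right x y)))
  have hm : max x y ^ 2 ≤ n := by rcases max_choice x y with h | h <;> rwa [h]
  nlinarith [Nat.mul_le_mul hmS hmS, Nat.mul_le_mul_right ((U + W) ^ 2) hm]

section IntPrimitive

variable {G : Type*} [AddCommGroup G]

noncomputable def intPrimitive (f : ℤ → G) (k : ℤ) : G :=
  ∑ t ∈ Finset.Ico 0 k, f t - ∑ t ∈ Finset.Ico k 0, f t

@[simp]
theorem intPrimitive_zero (f : ℤ → G) : intPrimitive f 0 = 0 := by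
  simp [intPrimitive]

theorem intPrimitive_add_one (f : ℤ → G) (k : ℤ) :
    intPrimitive f (k + 1) = intPrimitive f k + f k := by
  unfold intPrimitive
  rcases le_or_gt 0 k with hk | hk
  · rw [← Finset.sum_Ico_add_eq_sum_Ico_add_one hk,
      Finset.Ico_eq_empty_of_le (by omega : (0 : ℤ) ≤ k + 1),
      Finset.Ico_eq_empty_of_le (by omega : (0 : ℤ) ≤ k)]
    abel
  · rw [Finset.Ico_eq_empty_of_le (by omega : k + 1 ≤ 0),
      Finset.Ico_eq_empty_of_le (by omega : k ≤ 0),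
      ← Finset.insert_Ico_add_one_left_eq_Ico hk, Finset.sum_insert (by simp)]
    abel

theorem eq_add_intPrimitive {f g : ℤ → G} (hg : ∀ k, g (k + 1) = g k + f k) (k : ℤ) :
    g k = g 0 + intPrimitive f k := by
  have hper : Function.Periodic (fun k => g k - intPrimitive f k) 1 := fun k => by
    simp only [hg, intPrimitive_add_one]
    abel
  have := hper.zsmul_eq k
  simp only [zsmul_eq_mul, Int.cast_id, mul_one, intPrimitive_zero, sub_zero] at this
  rw [← this]
  abel

end IntPrimitive

theorem exists_mem_Ioc_ne_of_ne {β : Type*} {f : ℤ → β} {a b : ℤ} (h : f a ≠ f b) :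
    ∃ t ∈ Finset.Ioc (min a b) (max a b), f (t - 1) ≠ f t := by
  wlog hab : a ≤ b generalizing a b
  · simpa [min_comm, max_comm] using this h.symm (le_of_not_ge hab)
  rw [min_eq_left hab, max_eq_right hab]
  by_contra! hconst
  refine h ?_
  clear h
  induction b, hab using Int.leInduction with
  | base => rfl
  | succ m ham ih =>
    rw [ih fun t ht => hconst t (Finset.Ioc_subset_Ioc_right (by omega) ht),
      ← hconst (m + 1) (Finset.mem_Ioc.2 ⟨by omega, le_rfl⟩), add_sub_cancel_right]

theorem apply_eq_apply_zero_of_periodic {β : Type*} {f : ℤ × ℤ → β}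
    (h₁ : Function.Periodic f (1, 0)) (h₂ : Function.Periodic f (0, 1)) (p : ℤ × ℤ) :
    f p = f 0 := by
  have hp : p = p.1 • ((1 : ℤ), (0 : ℤ)) + p.2 • ((0 : ℤ), (1 : ℤ)) := by ext <;> simp
  rw [hp]
  exact ((h₁.zsmul p.1).add_period (h₂.zsmul p.2)).eq

theorem exists_potential {G : Type*} [AddCommGroup G] (h v : ℤ × ℤ → G)
    (hclosed : ∀ p, h p + v (p + (1, 0)) = v p + h (p + (0, 1))) :
    ∃ F : ℤ × ℤ → G, (∀ p, F (p + (1, 0)) = F p + h p) ∧ ∀ p, F (p + (0, 1)) = F p + v p := by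
  refine ⟨fun p => intPrimitive (fun j => v (0, j)) p.2 + intPrimitive (fun i => h (i, p.2)) p.1,
    fun ⟨i, j⟩ => ?_, fun ⟨i, j⟩ => ?_⟩
  · simp only [Prod.mk_add_mk, add_zero, intPrimitive_add_one]
    abel
  · have hnext : intPrimitive (fun i => h (i, j + 1)) i =
        intPrimitive (fun i => h (i, j)) i + v (i, j) - v (0, j) := by
      have := eq_add_intPrimitive (g := fun i => intPrimitive (fun i => h (i, j)) i + v (i, j))
        (f := fun i => h (i, j + 1)) (fun k => by
          have := hclosed (k, j)
          simp only [Prod.mk_add_mk, add_zero] at this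
          simp only [intPrimitive_add_one, add_assoc, this]) i
      simp only [intPrimitive_zero, zero_add] at this
      rw [this]
      abel
    simp only [Prod.mk_add_mk, add_zero, intPrimitive_add_one, hnext]
    abel

/-- Its kernel is the lattice `L = ℤ(n,0) ⊕ ℤ(-α,1)`, so it identifies `ℤ² / L` with `ZMod n`. -/
def torusCoord (n α : ℕ) : ℤ × ℤ →+ ZMod n :=
  AddMonoidHom.mk' (fun p => p.1 + p.2 * α) fun p q => by
    simp only [Prod.fst_add, Prod.snd_add]
    push_cast
    ring

@[simp]
theorem torusCoord_apply (n α : ℕ) (p : ℤ × ℤ) : torusCoord n α p = p.1 + p.2 * α := rfl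

theorem torusCoord_val {n : ℕ} [NeZero n] (α : ℕ) (c : ZMod n) :
    torusCoord n α ((c.val : ℤ), 0) = c := by
  simp only [torusCoord_apply, Int.cast_natCast, ZMod.natCast_zmod_val, Int.cast_zero, zero_mul,
    add_zero]

/- As `α² = -1` in `ZMod n`, the kernel is an ideal of `ℤ[i]`, generated by some `g = a + b i`; so
`g, i g` is a basis of it, and writing `(n, 0)` and `(-α, 1)` in this basis shows `a² + b² ∣ n`. -/
theorem exists_torusCoord_ker_basis {n α : ℕ} [NeZero n] (hdvd : n ∣ 1 + α ^ 2) :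
    ∃ a b : ℤ, a.natAbs ^ 2 + b.natAbs ^ 2 ≤ n ∧
      ∀ ℓ : ℤ × ℤ, torusCoord n α ℓ = 0 ↔ ∃ s t : ℤ, ℓ = s • (a, b) + t • (-b, a) := by
  have hα : (α : ZMod n) * α = ((-1 : ℤ) : ZMod n) := by
    have h := (ZMod.natCast_eq_zero_iff _ _).2 hdvd
    push_cast at h ⊢
    linear_combination h
  set ψ : GaussianInt →+* ZMod n := Zsqrtd.lift ⟨α, hα⟩
  obtain ⟨g, hg⟩ := IsPrincipalIdealRing.principal (RingHom.ker ψ)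
  have hmem : ∀ z, ψ z = 0 ↔ g ∣ z := fun z => by
    rw [← RingHom.mem_ker, hg, Ideal.submodule_span_eq, Ideal.mem_span_singleton]
  refine ⟨g.re, g.im, ?_, fun ℓ => ?_⟩
  · obtain ⟨c₁, hc₁⟩ := (hmem n).1 (map_natCast ψ n ▸ ZMod.natCast_self n)
    obtain ⟨c₂, hc₂⟩ := (hmem ⟨-α, 1⟩).1 (by simp [ψ])
    have e₁ := congrArg Zsqrtd.re hc₁
    have e₂ := congrArg Zsqrtd.im hc₁
    have e₃ := congrArg Zsqrtd.im hc₂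
    simp only [Zsqrtd.re_natCast, Zsqrtd.im_natCast, Zsqrtd.re_mul, Zsqrtd.im_mul] at e₁ e₂ e₃
    have hdet : (g.re ^ 2 + g.im ^ 2) * (c₁.re * c₂.im - c₁.im * c₂.re) = n := by
      linear_combination (-(g.re * c₂.im + g.im * c₂.re)) * e₁ - (n : ℤ) * e₃
        + (g.re * c₂.re + -1 * g.im * c₂.im) * e₂
    have := Int.le_of_dvd (by exact_mod_cast NeZero.pos n) ⟨_, hdet.symm⟩
    rw [← Int.natAbs_sq g.re, ← Int.natAbs_sq g.im] at this
    exact_mod_cast this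
  · rw [show torusCoord n α ℓ = ψ ⟨ℓ.1, ℓ.2⟩ by simp [ψ], hmem]
    constructor
    · rintro ⟨⟨s, t⟩, hc⟩
      have e₁ := congrArg Zsqrtd.re hc
      have e₂ := congrArg Zsqrtd.im hc
      simp only [Zsqrtd.re_mul, Zsqrtd.im_mul] at e₁ e₂
      refine ⟨s, t, Prod.ext ?_ ?_⟩
      · simp only [Prod.fst_add, Prod.smul_fst, smul_eq_mul]
        linear_combination e₁
      · simp only [Prod.snd_add, Prod.smul_snd, smul_eq_mul]
        linear_combination e₂
    · rintro ⟨s, t, rfl⟩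
      exact ⟨⟨s, t⟩, by
        ext <;> simp only [Prod.smul_mk, smul_eq_mul, Prod.mk_add_mk, Zsqrtd.re_mul,
          Zsqrtd.im_mul] <;> ring⟩

/-- `u` labels the vertical and `w` the horizontal edges of `ℤ²`, each edge by the image of its
upper or right endpoint in `ZMod n`; `F` is a potential of this labelling. -/
structure IsPotential (n α : ℕ) (u w : ZMod n → ZMod 2) (F : ℤ × ℤ → ZMod 2) : Prop where
  add_right : ∀ p, F (p + (1, 0)) = F p + w (torusCoord n α (p + (1, 0)))
  add_up : ∀ p, F (p + (0, 1)) = F p + u (torusCoord n α (p + (0, 1)))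

section Potential

variable {n α : ℕ} {u w : ZMod n → ZMod 2}

theorem exists_isPotential (hclosed : ∀ c, u c + u (c - 1) = w c + w (c - α)) :
    ∃ F, IsPotential n α u w F := by
  obtain ⟨F, hF₁, hF₂⟩ := exists_potential (fun p => w (torusCoord n α (p + (1, 0))))
    (fun p => u (torusCoord n α (p + (0, 1)))) fun p => by
      have hface : ∀ c, w (c - α) + u c = u (c - 1) + w c := fun c => by
        have := hclosed c
        grind
      convert hface (torusCoord n α (p + (1, 1))) using 3 <;>
        simp only [map_add, torusCoord_apply] <;> push_cast <;> ring
  exact ⟨F, hF₁, hF₂⟩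

namespace IsPotential

variable {F : ℤ × ℤ → ZMod 2} {ℓ : ℤ × ℤ}

theorem apply_add_sub_apply (hF : IsPotential n α u w F) (hℓ : torusCoord n α ℓ = 0)
    (p : ℤ × ℤ) : F (p + ℓ) - F p = F ℓ - F 0 := by
  have hshift : ∀ q, torusCoord n α (q + ℓ) = torusCoord n α q := fun q => by
    rw [map_add, hℓ, add_zero]
  have key := apply_eq_apply_zero_of_periodic (f := fun q => F (q + ℓ) - F q)
    (fun q => by
      simp only
      rw [add_right_comm, hF.add_right, hF.add_right, add_right_comm, hshift,
        add_sub_add_right_eq_sub])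
    (fun q => by
      simp only
      rw [add_right_comm, hF.add_up, hF.add_up, add_right_comm, hshift,
        add_sub_add_right_eq_sub]) p
  simpa using key

theorem periodic (hF : IsPotential n α u w F) (hℓ : torusCoord n α ℓ = 0) (h : F ℓ = F 0) :
    Function.Periodic F ℓ := fun p =>
  sub_eq_zero.1 ((hF.apply_add_sub_apply hℓ p).trans (sub_eq_zero.2 h))

theorem exists_coboundary [NeZero n] (hF : IsPotential n α u w F)
    (hper : ∀ ℓ, torusCoord n α ℓ = 0 → Function.Periodic F ℓ) :
    ∃ y : ZMod n → ZMod 2, (∀ c, u c = y c + y (c - α)) ∧ ∀ c, w c = y c + y (c - 1) := by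
  set s : ZMod n → ℤ × ℤ := fun c => ((c.val : ℤ), 0)
  have hs : ∀ c, torusCoord n α (s c) = c := torusCoord_val α
  have hFs : ∀ p, F p = F (s (torusCoord n α p)) := fun p => by
    have := hper (p - s (torusCoord n α p)) (by rw [map_sub, hs, sub_self]) (s (torusCoord n α p))
    rwa [add_sub_cancel] at this
  refine ⟨fun c => F (s c), fun c => ?_, fun c => ?_⟩
  · have hstep := hF.add_up (s (c - α))
    rw [hFs (s (c - α) + (0, 1))] at hstep
    simp only [map_add, hs, torusCoord_apply, Int.cast_zero, Int.cast_one, one_mul, zero_add,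
      sub_add_cancel] at hstep
    grind
  · have hstep := hF.add_right (s (c - 1))
    rw [hFs (s (c - 1) + (1, 0))] at hstep
    simp only [map_add, hs, torusCoord_apply, Int.cast_zero, Int.cast_one, zero_mul, add_zero,
      sub_add_cancel] at hstep
    grind

/-- The staircase from `p` up to `p + (0, ℓ.2)` and then across to `p + ℓ` meets the support. -/
theorem exists_ne_zero_of_ne (hF : IsPotential n α u w F) (p : ℤ × ℤ) (h : F p ≠ F (p + ℓ)) :
    (∃ t ∈ Finset.Ioc (min 0 ℓ.2) (max 0 ℓ.2), u (torusCoord n α p + t * α) ≠ 0) ∨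
      ∃ t ∈ Finset.Ioc (min 0 ℓ.1) (max 0 ℓ.1), w (torusCoord n α p + (ℓ.2 * α + t)) ≠ 0 := by
  have hup : ∀ t : ℤ, F (p + (0, t)) = F (p + (0, t - 1)) + u (torusCoord n α p + t * α) :=
    fun t => by
      have := hF.add_up (p + (0, t - 1))
      rwa [show p + (0, t - 1) + (0, 1) = p + (0, t) by ext <;> simp [add_assoc], map_add,
        torusCoord_apply n α (0, t), Int.cast_zero, zero_add] at this
  have hright : ∀ t : ℤ, F (p + (t, ℓ.2)) =
      F (p + (t - 1, ℓ.2)) + w (torusCoord n α p + (ℓ.2 * α + t)) := fun t => by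
    have := hF.add_right (p + (t - 1, ℓ.2))
    rwa [show p + (t - 1, ℓ.2) + (1, 0) = p + (t, ℓ.2) by ext <;> simp [add_assoc], map_add,
      torusCoord_apply n α (t, ℓ.2), add_comm (t : ZMod n)] at this
  by_cases hcol : F p = F (p + (0, ℓ.2))
  · obtain ⟨t, ht, hne⟩ := exists_mem_Ioc_ne_of_ne (f := fun t => F (p + (t, ℓ.2)))
      (a := 0) (b := ℓ.1) (by rwa [← hcol])
    exact Or.inr ⟨t, ht, fun h0 => hne (by rw [hright t, h0, add_zero])⟩
  · obtain ⟨t, ht, hne⟩ := exists_mem_Ioc_ne_of_ne (f := fun t => F (p + (0, t)))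
      (a := 0) (b := ℓ.2) (by simpa only [Prod.mk_zero_zero, add_zero] using hcol)
    exact Or.inl ⟨t, ht, fun h0 => hne (by rw [hup t, h0, add_zero])⟩

theorem le_natAbs_mul_hammingNorm_add [NeZero n] (hF : IsPotential n α u w F)
    (hℓ : torusCoord n α ℓ = 0) (hχ : F ℓ ≠ F 0) :
    n ≤ ℓ.2.natAbs * hammingNorm u + ℓ.1.natAbs * hammingNorm w := by
  set Iy := Finset.Ioc (min 0 ℓ.2) (max 0 ℓ.2)
  set Ix := Finset.Ioc (min 0 ℓ.1) (max 0 ℓ.1)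
  let eu : ℤ → ZMod n := fun t => t * α
  let ew : ℤ → ZMod n := fun t => ℓ.2 * α + t
  have hstair : ∀ c : ZMod n,
      1 ≤ #{t ∈ Iy | u (c + eu t) ≠ 0} + #{t ∈ Ix | w (c + ew t) ≠ 0} := fun c => by
    have hne : F ((c.val : ℤ), 0) ≠ F (((c.val : ℤ), 0) + ℓ) := fun h => hχ (sub_eq_zero.1 (by
      rw [← hF.apply_add_sub_apply hℓ, h, sub_self]))
    rcases hF.exists_ne_zero_of_ne _ hne with ⟨t, ht, h0⟩ | ⟨t, ht, h0⟩ <;>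
      rw [torusCoord_val] at h0
    · exact le_add_right (Finset.card_pos.2 ⟨t, Finset.mem_filter.2 ⟨ht, h0⟩⟩)
    · exact le_add_left (Finset.card_pos.2 ⟨t, Finset.mem_filter.2 ⟨ht, h0⟩⟩)
  calc n = ∑ _c : ZMod n, 1 := by simp
    _ ≤ ∑ c : ZMod n, (#{t ∈ Iy | u (c + eu t) ≠ 0} + #{t ∈ Ix | w (c + ew t) ≠ 0}) :=
      Finset.sum_le_sum fun c _ => hstair c
    _ = ℓ.2.natAbs * hammingNorm u + ℓ.1.natAbs * hammingNorm w := by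
      rw [Finset.sum_add_distrib, sum_card_filter_apply_add_ne_zero,
        sum_card_filter_apply_add_ne_zero, Int.card_Ioc, Int.card_Ioc]
      congr 2 <;> omega

end IsPotential

end Potential

theorem stmt_18_general (n : ℕ) [NeZero n] (α : ℕ) (hn : 6 ≤ n) (hα2 : α ≤ n - 1)
    (hdvd : n ∣ 1 + α ^ 2)
    (v : ZMod n ⊕ ZMod n → ZMod 2)
    (hker : (Matrix.fromCols (Circ n (1 + X)) (Circ n (1 + X ^ α))).mulVec v = 0)
    (hrow : ¬ ∃ y : ZMod n → ZMod 2,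
      Matrix.vecMul y
        (Matrix.fromCols (Circ n (1 + X ^ α)).transpose (Circ n (1 + X)).transpose) = v) :
    Real.sqrt (n : ℝ) ≤ (hammingNorm v : ℝ) := by
  obtain ⟨u, w, rfl⟩ : ∃ u w, v = Sum.elim u w := ⟨_, _, (Sum.elim_comp_inl_inr v).symm⟩
  have hn1 : 1 < n := by omega
  have hαn : α < n := by omega
  have hclosed : ∀ c, u c + u (c - 1) = w c + w (c - α) := fun c =>
    CharTwo.add_eq_zero.1 (congrFun (fromCols_Circ_mulVec_sumElim hn1 hαn u w ▸ hker) c)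
  obtain ⟨F, hF⟩ := exists_isPotential hclosed
  obtain ⟨a, b, hab, hL⟩ := exists_torusCoord_ker_basis hdvd
  have hab₁ : torusCoord n α (a, b) = 0 := (hL _).2 ⟨1, 0, by simp⟩
  have hab₂ : torusCoord n α (-b, a) = 0 := (hL _).2 ⟨0, 1, by simp⟩
  by_cases hχ : F (a, b) = F 0 ∧ F (-b, a) = F 0
  · refine absurd ?_ hrow
    obtain ⟨y, hu, hw⟩ := hF.exists_coboundary fun ℓ hℓ => by
      obtain ⟨s, t, rfl⟩ := (hL ℓ).1 hℓ
      exact ((hF.periodic hab₁ hχ.1).zsmul s).add_period ((hF.periodic hab₂ hχ.2).zsmul t)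
    refine ⟨y, ?_⟩
    rw [vecMul_fromCols_Circ_transpose hn1 hαn]
    ext (c | c) <;> simp [hu, hw]
  · have ha : a.natAbs ^ 2 ≤ n := (Nat.le_add_right _ _).trans hab
    have hb : b.natAbs ^ 2 ≤ n := (Nat.le_add_left _ _).trans hab
    have hsq : n ≤ (hammingNorm u + hammingNorm w) ^ 2 := by
      rcases not_and_or.1 hχ with h | h
      · exact le_sq_add_of_le_mul_add_mul hb ha (hF.le_natAbs_mul_hammingNorm_add hab₁ h)
      · exact le_sq_add_of_le_mul_add_mul ha (by rwa [Int.natAbs_neg])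
          (hF.le_natAbs_mul_hammingNorm_add hab₂ h)
    rw [hammingNorm_sumElim, Real.sqrt_le_left (by positivity)]
    exact_mod_cast hsq

/-- for `n ≥ 6`, `1 ≤ α ≤ n−1` with `n ∣ 1 + α²`, every vector in the
kernel of `H_X = [Circ(1+x), Circ(1+x^α)]` not in the row space of
`H_Z = [Circ(1+x^α)ᵀ, Circ(1+x)ᵀ]` has Hamming weight at least `√n`. -/
theorem stmt_18 (n : ℕ) [NeZero n] (α : ℕ) (hn : 6 ≤ n) (hα1 : 1 ≤ α) (hα2 : α ≤ n - 1)
    (hdvd : n ∣ 1 + α ^ 2)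
    (v : ZMod n ⊕ ZMod n → ZMod 2)
    (hker : (Matrix.fromCols (Circ n (1 + X)) (Circ n (1 + X ^ α))).mulVec v = 0)
    (hrow : ¬ ∃ y : ZMod n → ZMod 2,
      Matrix.vecMul y
        (Matrix.fromCols (Circ n (1 + X ^ α)).transpose (Circ n (1 + X)).transpose) = v) :
    Real.sqrt (n : ℝ) ≤ (hammingNorm v : ℝ) :=
  stmt_18_general n α hn hα2 hdvd v hker hrow
end

section
/- Let n ≥ 2 and let A, B ∈ F₂[x] of degree ≤ n−1. The dimension of the CSS code with H_X = [Circ(A,n), Circ(B,n)] and H_Z = [Circ(B,n)ᵀ, Circ(A,n)ᵀ] is k = 2n − rank(H_X) − rank(H_Z) = 2·deg(gcd(A, B, x^n − 1)). -/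
open Polynomial

namespace LinearMap

variable {R S : Type*} [CommSemiring R] [CommSemiring S] [Algebra R S]

variable (R) in
theorem range_mulLeft (a : S) : range (mulLeft R a) = (Ideal.span {a}).restrictScalars R := by
  ext x
  simp [Ideal.mem_span_singleton', mul_comm]

theorem range_mulLeft_sup_of_span_pair_eq {a b d : S} (h : Ideal.span {a, b} = Ideal.span {d}) :
    range (mulLeft R a) ⊔ range (mulLeft R b) = range (mulLeft R d) := by
  rw [range_mulLeft, range_mulLeft, range_mulLeft, ← Submodule.restrictScalars_sup,
    ← Ideal.span_insert, h]

theorem ker_mulLeft_inf_of_span_pair_eq {a b d : S} (h : Ideal.span {a, b} = Ideal.span {d}) :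
    ker (mulLeft R a) ⊓ ker (mulLeft R b) = ker (mulLeft R d) := by
  obtain ⟨u, v, hd⟩ := Ideal.mem_span_pair.mp (h ▸ Ideal.mem_span_singleton_self d)
  have hdvd : ∀ c ∈ ({a, b} : Set S), d ∣ c := fun c hc =>
    Ideal.mem_span_singleton.mp (h ▸ Ideal.subset_span hc)
  ext x
  simp only [Submodule.mem_inf, mem_ker, mulLeft_apply]
  constructor
  · rintro ⟨ha, hb⟩
    rw [← hd, add_mul, mul_assoc, mul_assoc, ha, hb, mul_zero, mul_zero, add_zero]
  · intro hx
    have hzero : ∀ c ∈ ({a, b} : Set S), c * x = 0 := fun c hc => by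
      obtain ⟨c', rfl⟩ := hdvd c hc
      rw [mul_right_comm, hx, zero_mul]
    exact ⟨hzero a (by simp), hzero b (by simp)⟩

end LinearMap

theorem EuclideanDomain.span_gcd_gcd {α : Type*} [EuclideanDomain α] [DecidableEq α] (a b c : α) :
    Ideal.span {gcd a (gcd b c)} = Ideal.span {a, b, c} := by
  rw [span_gcd, Ideal.span_insert, span_gcd, ← Ideal.span_insert]

theorem Ideal.span_pair_map_eq_span_map_gcd {α S : Type*} [EuclideanDomain α] [DecidableEq α]
    [CommSemiring S] (φ : α →+* S) {c : α} (hc : φ c = 0) (a b : α) :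
    Ideal.span {φ a, φ b} = Ideal.span {φ (EuclideanDomain.gcd a (EuclideanDomain.gcd b c))} := by
  conv_rhs => rw [← Set.image_singleton, ← Ideal.map_span, EuclideanDomain.span_gcd_gcd]
  rw [Ideal.map_span, Set.image_insert_eq, Set.image_pair, hc, Set.pair_comm (φ b), Set.insert_comm,
    Ideal.span_insert_zero]

theorem AdjoinRoot.finrank_range_mulLeft_mk {K : Type*} [Field K] {f D : K[X]} (hf : f ≠ 0)
    (hD : D ∣ f) :
    Module.finrank K (LinearMap.range (LinearMap.mulLeft K (mk f D))) =
      f.natDegree - D.natDegree := by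
  have : Module.Finite K (AdjoinRoot f) := (powerBasis hf).finite
  have hmap : Ideal.map (Ideal.Quotient.mkₐ K (Ideal.span {f})) (Ideal.span {D}) =
      Ideal.span {mk f D} := by
    rw [Ideal.map_span, Set.image_singleton]; rfl
  have hquot : (AdjoinRoot f ⧸ Ideal.span {mk f D}) ≃ₐ[K] K[X] ⧸ Ideal.span {D} :=
    hmap ▸ DoubleQuot.quotQuotEquivQuotOfLEₐ K (Ideal.span_singleton_le_span_singleton.mpr hD)
  have := Submodule.finrank_quotient_add_finrank ((Ideal.span {mk f D}).restrictScalars K)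
  rw [(Submodule.Quotient.restrictScalarsEquiv K _).finrank_eq, hquot.toLinearEquiv.finrank_eq,
    finrank_quotient_span_eq_natDegree, (powerBasis hf).finrank, powerBasis_dim] at this
  rw [LinearMap.range_mulLeft]
  omega

namespace Matrix

variable {R m p q : Type*} [CommSemiring R]

theorem range_mulVecLin_fromCols [Fintype p] [Fintype q] (M : Matrix m p R) (N : Matrix m q R) :
    LinearMap.range (fromCols M N).mulVecLin =
      LinearMap.range M.mulVecLin ⊔ LinearMap.range N.mulVecLin := by
  have : (fromCols M N).mulVecLin = (M.mulVecLin.coprod N.mulVecLin) ∘ₗ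
      (LinearEquiv.sumArrowLequivProdArrow p q R R).toLinearMap := by
    ext v : 1
    exact fromCols_mulVec M N v
  rw [this, LinearMap.range_comp_of_range_eq_top _ (LinearEquiv.range _), LinearMap.range_coprod]

theorem ker_mulVecLin_fromRows [Fintype m] (M : Matrix p m R) (N : Matrix q m R) :
    LinearMap.ker (fromRows M N).mulVecLin =
      LinearMap.ker M.mulVecLin ⊓ LinearMap.ker N.mulVecLin := by
  ext v
  simp [funext_iff]

variable {K V : Type*} [Field K] [AddCommGroup V] [Module K V] [Fintype m]
  (ψ : (m → K) ≃ₗ[K] V) {M N : Matrix m m K} {g h : V →ₗ[K] V}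

theorem rank_fromCols_of_intertwines (hM : ψ.toLinearMap ∘ₗ M.mulVecLin = g ∘ₗ ψ.toLinearMap)
    (hN : ψ.toLinearMap ∘ₗ N.mulVecLin = h ∘ₗ ψ.toLinearMap) :
    (fromCols M N).rank = Module.finrank K ↥(LinearMap.range g ⊔ LinearMap.range h) := by
  have hrange : ∀ {P : Matrix m m K} {f : V →ₗ[K] V},
      ψ.toLinearMap ∘ₗ P.mulVecLin = f ∘ₗ ψ.toLinearMap →
        (LinearMap.range P.mulVecLin).map ψ.toLinearMap = LinearMap.range f := fun hP => by
    rw [← LinearMap.range_comp, hP, LinearMap.range_comp_of_range_eq_top _ (LinearEquiv.range _)]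
  rw [rank, range_mulVecLin_fromCols, ← LinearEquiv.finrank_map_eq ψ, Submodule.map_sup,
    hrange hM, hrange hN]

theorem rank_fromRows_of_intertwines (hM : ψ.toLinearMap ∘ₗ M.mulVecLin = g ∘ₗ ψ.toLinearMap)
    (hN : ψ.toLinearMap ∘ₗ N.mulVecLin = h ∘ₗ ψ.toLinearMap) {k : V →ₗ[K] V}
    (hk : LinearMap.ker g ⊓ LinearMap.ker h = LinearMap.ker k) :
    (fromRows M N).rank = Module.finrank K (LinearMap.range k) := by
  have hker : ∀ {P : Matrix m m K} {f : V →ₗ[K] V},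
      ψ.toLinearMap ∘ₗ P.mulVecLin = f ∘ₗ ψ.toLinearMap →
        LinearMap.ker P.mulVecLin = (LinearMap.ker f).comap ψ.toLinearMap := fun hP => by
    rw [← LinearMap.ker_comp, ← hP, LinearEquiv.ker_comp]
  have := ψ.finiteDimensional
  have hrows := LinearMap.finrank_range_add_finrank_ker (fromRows M N).mulVecLin
  rw [ker_mulVecLin_fromRows, hker hM, hker hN, ← Submodule.comap_inf, hk,
    Submodule.comap_equiv_eq_map_symm, LinearEquiv.finrank_map_eq, ψ.finrank_eq] at hrows
  have hdim := LinearMap.finrank_range_add_finrank_ker k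
  rw [rank]
  omega

end Matrix

namespace Polynomial

variable {R : Type*} [CommRing R] (n : ℕ)

theorem monic_X_pow_sub_one [NeZero n] : (X ^ n - 1 : R[X]).Monic := by
  simpa using monic_X_pow_sub_C (1 : R) (NeZero.ne n)

theorem natDegree_X_pow_sub_one [Nontrivial R] : (X ^ n - 1 : R[X]).natDegree = n := by
  simpa using natDegree_X_pow_sub_C (n := n) (r := (1 : R))

end Polynomial

namespace AdjoinRoot

variable {R : Type*} [CommRing R] (n : ℕ)

theorem root_X_pow_sub_one_pow : root (X ^ n - 1 : R[X]) ^ n = 1 := by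
  have := eval₂_root (X ^ n - 1 : R[X])
  rwa [eval₂_sub, eval₂_X_pow, eval₂_one, sub_eq_zero] at this

variable [NeZero n]

theorem root_X_pow_sub_one_pow_val_add (i j : ZMod n) :
    root (X ^ n - 1 : R[X]) ^ (i + j).val =
      root (X ^ n - 1 : R[X]) ^ i.val * root (X ^ n - 1 : R[X]) ^ j.val :=
  (AddChar.zmodChar n (root_X_pow_sub_one_pow n)).map_add_eq_mul i j

variable [Nontrivial R]

noncomputable def rootPowBasis : Module.Basis (ZMod n) R (AdjoinRoot (X ^ n - 1 : R[X])) :=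
  (powerBasis' (monic_X_pow_sub_one n)).basis.reindex
    ((finCongr ((powerBasis'_dim _).trans (natDegree_X_pow_sub_one n))).trans
      (ZMod.finEquiv n).toEquiv)

theorem rootPowBasis_apply (i : ZMod n) :
    rootPowBasis n i = root (X ^ n - 1 : R[X]) ^ i.val := by
  rw [rootPowBasis, Module.Basis.reindex_apply, PowerBasis.coe_basis, powerBasis'_gen]
  obtain ⟨m, rfl⟩ : ∃ m, n = m + 1 := Nat.exists_eq_succ_of_ne_zero (NeZero.ne n)
  rfl

theorem sum_coeff_smul_rootPowBasis {A : R[X]} (hA : A.natDegree < n) :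
    ∑ i, A.coeff i.val • rootPowBasis n i = mk (X ^ n - 1) A := by
  rw [← aeval_eq, aeval_eq_sum_range' hA]
  refine Finset.sum_nbij' ZMod.val (fun k => (k : ZMod n)) (fun i _ => ?_) (by simp)
    (fun i _ => ZMod.natCast_zmod_val i) (fun k hk => ?_) (fun i _ => by rw [rootPowBasis_apply])
  · exact Finset.mem_range.mpr (ZMod.val_lt i)
  · exact ZMod.val_cast_of_lt (Finset.mem_range.mp hk)

end AdjoinRoot

open AdjoinRoot in
theorem circ_intertwines_mulLeft (n : ℕ) [NeZero n] {A : (ZMod 2)[X]} (hA : A.natDegree < n) :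
    (rootPowBasis n).equivFun.symm.toLinearMap ∘ₗ (Circ n A).mulVecLin =
      LinearMap.mulLeft (ZMod 2) (mk (X ^ n - 1) A) ∘ₗ
        (rootPowBasis n).equivFun.symm.toLinearMap := by
  have hcol : ∀ k : ZMod n, ∑ j, A.coeff (j - k).val • rootPowBasis n j =
      mk (X ^ n - 1) A * rootPowBasis n k := fun k => by
    rw [← sum_coeff_smul_rootPowBasis n hA, Finset.sum_mul, ← Equiv.sum_comp (Equiv.addRight k)]
    refine Finset.sum_congr rfl fun i _ => ?_
    rw [Equiv.coe_addRight, add_sub_cancel_right, smul_mul_assoc, rootPowBasis_apply,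
      rootPowBasis_apply, rootPowBasis_apply, root_X_pow_sub_one_pow_val_add]
  ext v
  simp only [LinearMap.comp_apply, LinearEquiv.coe_coe, Module.Basis.equivFun_symm_apply,
    Matrix.mulVecLin_apply, LinearMap.mulLeft_apply, Finset.mul_sum, Matrix.mulVec, dotProduct,
    Circ, Matrix.of_apply, Finset.sum_smul]
  rw [Finset.sum_comm]
  refine Finset.sum_congr rfl fun k _ => ?_
  rw [mul_smul_comm, ← hcol, Finset.smul_sum]
  refine Finset.sum_congr rfl fun j _ => ?_
  rw [smul_smul, mul_comm]

theorem stmt_19_general (n : ℕ) [NeZero n] (A B : Polynomial (ZMod 2))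
    (hA : A.natDegree ≤ n - 1) (hB : B.natDegree ≤ n - 1) :
    2 * n - (Matrix.fromCols (Circ n A) (Circ n B)).rank
        - (Matrix.fromCols (Circ n B).transpose (Circ n A).transpose).rank =
      2 * (EuclideanDomain.gcd A (EuclideanDomain.gcd B (X ^ n - 1))).natDegree := by
  set D := EuclideanDomain.gcd A (EuclideanDomain.gcd B (X ^ n - 1))
  have hCircA := circ_intertwines_mulLeft n (A := A) (by have := NeZero.pos n; omega)
  have hCircB := circ_intertwines_mulLeft n (A := B) (by have := NeZero.pos n; omega)
  have hspan : Ideal.span {AdjoinRoot.mk (X ^ n - 1) A, AdjoinRoot.mk (X ^ n - 1) B} =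
      Ideal.span {AdjoinRoot.mk (X ^ n - 1) D} :=
    Ideal.span_pair_map_eq_span_map_gcd _ AdjoinRoot.mk_self A B
  have hD : D ∣ X ^ n - 1 :=
    (EuclideanDomain.gcd_dvd_right _ _).trans (EuclideanDomain.gcd_dvd_right _ _)
  have hDn : D.natDegree ≤ n := natDegree_X_pow_sub_one (R := ZMod 2) n ▸
    natDegree_le_of_dvd hD (monic_X_pow_sub_one n).ne_zero
  rw [Matrix.rank_fromCols_of_intertwines _ hCircA hCircB,
    LinearMap.range_mulLeft_sup_of_span_pair_eq hspan, ← Matrix.transpose_fromRows,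
    Matrix.rank_transpose, Matrix.rank_fromRows_of_intertwines _ hCircB hCircA
      (by rw [inf_comm]; exact LinearMap.ker_mulLeft_inf_of_span_pair_eq hspan),
    AdjoinRoot.finrank_range_mulLeft_mk (monic_X_pow_sub_one n).ne_zero hD,
    natDegree_X_pow_sub_one]
  omega

/-- the dimension of the CSS code with `H_X = [Circ(A), Circ(B)]` and
`H_Z = [Circ(B)ᵀ, Circ(A)ᵀ]` is
`k = 2n − rank H_X − rank H_Z = 2·deg gcd(A, B, xⁿ − 1)`. -/
theorem stmt_19 (n : ℕ) [NeZero n] (hn : 2 ≤ n) (A B : Polynomial (ZMod 2))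
    (hA : A.natDegree ≤ n - 1) (hB : B.natDegree ≤ n - 1) :
    2 * n - (Matrix.fromCols (Circ n A) (Circ n B)).rank
        - (Matrix.fromCols (Circ n B).transpose (Circ n A).transpose).rank =
      2 * (EuclideanDomain.gcd A (EuclideanDomain.gcd B (X ^ n - 1))).natDegree :=
  stmt_19_general n A B hA hB
end
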